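/- arXiv:2306.10719 — 7 statements merged into one kernel-verified Lean document; each statement's English description precedes it below -/
import Mathlib

section
/- Let C : ℤ → U(2) satisfy the standing Assumption, let U = S∘C (a unitary operator on ℋ = ℓ²(ℤ;ℂ²)), and let J be a bounded interval with J ⊇ chs(C−I₂). Then for every λ ∈ ℂ with |λ| > 1 and every ψ ∈ ℋ: (1_J U 1_J − λ)(1_J (U−λ)^{−1} 1_J ψ) = λ(λ−1)·0 + 1_J ψ, i.e. (1_J U 1_J)(1_J (U−λ)^{−1} 1_J ψ) − λ·(1_J (U−λ)^{−1} 1_J ψ) = 1_J ψ. Consequently, the cut-off resolvent 1_J (U−λ)^{−1} 1_J, restricted to the finite-dimensional subspace of elements of ℋ supported in J, is a two-sided inverse of the restriction of 1_J U 1_J − λ to that subspace. -/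
noncomputable section

open scoped ComplexConjugate

/-- A state: a map ℤ → ℂ², components `ψ x 0` (left, ψ^L) and `ψ x 1` (right, ψ^R). -/
abbrev QWState := ℤ → Fin 2 → ℂ

/-- The quantum walk operator U = S∘C acting pointwise:
`(Uψ)(x) = ((C(x+1)ψ(x+1))₁, (C(x−1)ψ(x−1))₂)`. -/
def qwalk (C : ℤ → Matrix (Fin 2) (Fin 2) ℂ) (ψ : QWState) : QWState :=
  fun x => ![(C (x + 1)).mulVec (ψ (x + 1)) 0, (C (x - 1)).mulVec (ψ (x - 1)) 1]

/-- The standing Assumption on the coin. -/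
structure CoinAssumption (C : ℤ → Matrix (Fin 2) (Fin 2) ℂ) : Prop where
  unitary : ∀ x, C x ∈ Matrix.unitaryGroup (Fin 2) ℂ
  d11 : ∀ x, C x 0 0 ≠ 0
  d22 : ∀ x, C x 1 1 ≠ 0
  fin : Set.Finite {x : ℤ | C x ≠ 1}

/-- Outgoing: ψ^L vanishes far right, ψ^R vanishes far left. -/
def Outgoing (ψ : QWState) : Prop :=
  ∃ r : ℤ, 0 < r ∧ ∀ x : ℤ, r < x → ψ x 0 = 0 ∧ ψ (-x) 1 = 0

/-- Indicator (as a complex factor) of the integer interval [a,b]. -/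
def jind (a b x : ℤ) : ℂ := if a ≤ x ∧ x ≤ b then 1 else 0

/-- The convex hull chs(C−I₂) of the support of C−I₂, as a subset of ℤ. -/
def chsSet (C : ℤ → Matrix (Fin 2) (Fin 2) ℂ) : Set ℤ :=
  {x | ∃ y z : ℤ, C y ≠ 1 ∧ C z ≠ 1 ∧ y ≤ x ∧ x ≤ z}

/-- The Hilbert space ℋ = ℓ²(ℤ; ℂ²). -/
abbrev H2 := lp (fun _ : ℤ => EuclideanSpace ℂ (Fin 2)) 2

/-- Pointwise value of an element of ℋ. -/
def ev (ψ : H2) (x : ℤ) (i : Fin 2) : ℂ := (ψ : ∀ _ : ℤ, EuclideanSpace ℂ (Fin 2)) x i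

/-!
Off `J` the coin is trivial, so `(U - λ)η = 0` there reads `η^L(x+1) = λ η^L(x)` to the right of
`J` and `η^R(x-1) = λ η^R(x)` to the left of it; for bounded `η` and `|λ| > 1` both tails vanish.
Then the cut-off `1_J` in front of `η` is invisible to `U` on `J`, which gives the right inverse.
For the left inverse, `1_J η - θ` is supported in `J` and satisfies `1_J U φ = λ φ`; as `U`
preserves the `ℓ²` mass of `φ` and `1_J` does not increase it, `|λ|² ‖φ‖² ≤ ‖φ‖²`, so `φ = 0`.
-/

open Finset
open scoped Matrix

lemma eq_zero_of_norm_le_of_succ_eq_smul {𝕜 E : Type*} [NormedField 𝕜] [NormedAddCommGroup E]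
    [NormedSpace 𝕜 E] {u : ℕ → E} {c : 𝕜} (hc : 1 < ‖c‖) {M : ℝ} (hM : ∀ n, ‖u n‖ ≤ M)
    (hu : ∀ n, u (n + 1) = c • u n) : u 0 = 0 := by
  have hnorm : ∀ n, ‖u n‖ = ‖c‖ ^ n * ‖u 0‖ := by
    intro n
    induction n with
    | zero => simp
    | succ n ih => rw [hu, norm_smul, ih, pow_succ]; ring
  by_contra h0
  obtain ⟨n, hn⟩ := pow_unbounded_of_one_lt (M / ‖u 0‖) hc
  have hle := hM n
  rw [hnorm, ← le_div_iff₀ (norm_pos_iff.mpr h0)] at hle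
  linarith

lemma sum_Icc_comp_add_of_vanishing {M : Type*} [AddCommMonoid M] {f : ℤ → M} {a b : ℤ}
    (hf : ∀ x, ¬ (a ≤ x ∧ x ≤ b) → f x = 0) {m n k : ℤ} (hm : m + k ≤ a) (hn : b ≤ n + k) :
    ∑ x ∈ Icc m n, f (x + k) = ∑ x ∈ Icc a b, f x := by
  calc ∑ x ∈ Icc m n, f (x + k) = ∑ x ∈ Icc (m + k) (n + k), f x := by
        rw [← map_add_right_Icc, sum_map]
        rfl
    _ = ∑ x ∈ Icc a b, f x :=
        (sum_subset (Icc_subset_Icc hm hn) fun x _ hx => hf x (by simpa using hx)).symm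

lemma sum_norm_sq_mulVec_of_mem_unitaryGroup {n 𝕜 : Type*} [Fintype n] [DecidableEq n] [RCLike 𝕜]
    {U : Matrix n n 𝕜} (hU : U ∈ Matrix.unitaryGroup n 𝕜) (v : n → 𝕜) :
    ∑ i, ‖(U *ᵥ v) i‖ ^ 2 = ∑ i, ‖v i‖ ^ 2 := by
  have h := ContinuousLinearMap.norm_map_of_mem_unitary
    (Unitary.map_mem (Matrix.toEuclideanCLM (n := n) (𝕜 := 𝕜)) hU) (WithLp.toLp 2 v)
  rw [Matrix.toEuclideanCLM_toLp, ← sq_eq_sq₀ (norm_nonneg _) (norm_nonneg _),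
    EuclideanSpace.norm_sq_eq, EuclideanSpace.norm_sq_eq] at h
  exact h

lemma norm_ev_le (η : H2) (x : ℤ) (i : Fin 2) : ‖ev η x i‖ ≤ ‖η‖ :=
  (PiLp.norm_apply_le _ i).trans (lp.norm_apply_le_norm two_ne_zero η x)

def SupportedIn (a b : ℤ) (φ : QWState) : Prop :=
  ∀ x, ¬ (a ≤ x ∧ x ≤ b) → ∀ i, φ x i = 0

section QuantumWalk

variable {C : ℤ → Matrix (Fin 2) (Fin 2) ℂ} {a b : ℤ} {lam : ℂ}

lemma jind_eq_one {x : ℤ} (h : a ≤ x ∧ x ≤ b) : jind a b x = 1 := if_pos h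

lemma jind_eq_zero {x : ℤ} (h : ¬ (a ≤ x ∧ x ≤ b)) : jind a b x = 0 := if_neg h

lemma qwalk_apply_zero (ψ : QWState) (x : ℤ) : qwalk C ψ x 0 = (C (x + 1) *ᵥ ψ (x + 1)) 0 := rfl

lemma qwalk_apply_one (ψ : QWState) (x : ℤ) : qwalk C ψ x 1 = (C (x - 1) *ᵥ ψ (x - 1)) 1 := rfl

lemma qwalk_sub (φ ψ : QWState) : qwalk C (φ - ψ) = qwalk C φ - qwalk C ψ := by
  funext x i
  fin_cases i <;> simp [qwalk, Matrix.mulVec_sub]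

lemma tails_eq_zero_of_qwalk_eq_smul (hC : ∀ x, ¬ (a ≤ x ∧ x ≤ b) → C x = 1)
    (hlam : 1 < ‖lam‖) {η : QWState} {M : ℝ} (hM : ∀ x i, ‖η x i‖ ≤ M)
    (hη : ∀ x, ¬ (a ≤ x ∧ x ≤ b) → ∀ i, qwalk C η x i = lam * η x i) :
    (∀ x, b < x → η x 0 = 0) ∧ (∀ x, x < a → η x 1 = 0) := by
  constructor
  · intro x hx
    suffices h : ∀ n : ℕ, η (x + (n + 1 : ℕ)) 0 = lam • η (x + n) 0 by
      simpa using eq_zero_of_norm_le_of_succ_eq_smul (u := fun n : ℕ => η (x + n) 0)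
        hlam (fun n => hM _ _) h
    intro n
    have h := hη (x + n) (by omega) 0
    rw [qwalk_apply_zero, hC _ (by omega), Matrix.one_mulVec] at h
    simpa [add_assoc] using h
  · intro x hx
    suffices h : ∀ n : ℕ, η (x - (n + 1 : ℕ)) 1 = lam • η (x - n) 1 by
      simpa using eq_zero_of_norm_le_of_succ_eq_smul (u := fun n : ℕ => η (x - n) 1)
        hlam (fun n => hM _ _) h
    intro n
    have h := hη (x - n) (by omega) 1
    rw [qwalk_apply_one, hC _ (by omega), Matrix.one_mulVec] at h
    simpa [sub_add_eq_sub_sub] using h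

lemma qwalk_cutoff_apply_of_mem (hC : ∀ x, ¬ (a ≤ x ∧ x ≤ b) → C x = 1) {η : QWState}
    (hL : ∀ x, b < x → η x 0 = 0) (hR : ∀ x, x < a → η x 1 = 0) {x : ℤ}
    (hx : a ≤ x ∧ x ≤ b) (i : Fin 2) :
    qwalk C (fun y j => jind a b y * η y j) x i = qwalk C η x i := by
  match i with
  | 0 =>
    rw [qwalk_apply_zero, qwalk_apply_zero]
    by_cases hb : x + 1 ≤ b
    · simp [jind_eq_one (show a ≤ x + 1 ∧ x + 1 ≤ b by omega)]
    · simp [jind_eq_zero (show ¬ (a ≤ x + 1 ∧ x + 1 ≤ b) by omega), hC (x + 1) (by omega),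
        hL (x + 1) (by omega)]
  | 1 =>
    rw [qwalk_apply_one, qwalk_apply_one]
    by_cases ha : a ≤ x - 1
    · simp [jind_eq_one (show a ≤ x - 1 ∧ x - 1 ≤ b by omega)]
    · simp [jind_eq_zero (show ¬ (a ≤ x - 1 ∧ x - 1 ≤ b) by omega), hC (x - 1) (by omega),
        hR (x - 1) (by omega)]

lemma sum_norm_sq_qwalk (hCu : ∀ x, C x ∈ Matrix.unitaryGroup (Fin 2) ℂ) {φ : QWState}
    (hφ : SupportedIn a b φ) :
    ∑ x ∈ Icc (a - 1) (b + 1), ∑ i, ‖qwalk C φ x i‖ ^ 2 = ∑ x ∈ Icc a b, ∑ i, ‖φ x i‖ ^ 2 := by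
  have hCφ : ∀ i, ∀ x, ¬ (a ≤ x ∧ x ≤ b) → ‖(C x *ᵥ φ x) i‖ ^ 2 = 0 := by
    intro i x hx
    simp [show φ x = 0 from funext (hφ x hx)]
  simp only [Fin.sum_univ_two, sum_add_distrib, qwalk_apply_zero, qwalk_apply_one, sub_eq_add_neg]
  rw [sum_Icc_comp_add_of_vanishing (hCφ 0) (by omega) (by omega),
    sum_Icc_comp_add_of_vanishing (hCφ 1) (by omega) (by omega), ← sum_add_distrib,
    ← sum_add_distrib]
  refine sum_congr rfl fun x _ => ?_
  simpa [Fin.sum_univ_two] using sum_norm_sq_mulVec_of_mem_unitaryGroup (hCu x) (φ x)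

lemma eq_zero_of_cutoff_qwalk_eq_smul (hCu : ∀ x, C x ∈ Matrix.unitaryGroup (Fin 2) ℂ)
    (hlam : 1 < ‖lam‖) {φ : QWState} (hφ : SupportedIn a b φ)
    (heig : ∀ x i, jind a b x * qwalk C φ x i = lam * φ x i) : φ = 0 := by
  set N := ∑ x ∈ Icc a b, ∑ i, ‖φ x i‖ ^ 2
  have hN : 0 ≤ N := by positivity
  have hle : ‖lam‖ ^ 2 * N ≤ N := calc
    ‖lam‖ ^ 2 * N = ∑ x ∈ Icc a b, ∑ i, ‖qwalk C φ x i‖ ^ 2 := by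
      rw [mul_sum]
      refine sum_congr rfl fun x hx => ?_
      rw [mul_sum]
      refine sum_congr rfl fun i _ => ?_
      rw [← mul_pow, ← norm_mul, ← heig, jind_eq_one (mem_Icc.mp hx), one_mul]
    _ ≤ ∑ x ∈ Icc (a - 1) (b + 1), ∑ i, ‖qwalk C φ x i‖ ^ 2 :=
      sum_le_sum_of_subset_of_nonneg (Icc_subset_Icc (by omega) (by omega))
        fun _ _ _ => by positivity
    _ = N := sum_norm_sq_qwalk hCu hφ
  have hN0 : N = 0 := by nlinarith [one_lt_pow₀ hlam two_ne_zero]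
  funext x i
  by_cases hx : a ≤ x ∧ x ≤ b
  · have hx0 := (sum_eq_zero_iff_of_nonneg (fun _ _ => by positivity)).mp hN0 x (mem_Icc.mpr hx)
    simpa using (sum_eq_zero_iff_of_nonneg (fun _ _ => by positivity)).mp hx0 i (mem_univ i)
  · exact hφ x hx i

lemma cutoff_qwalk_sub_smul_cutoff (hC : ∀ x, ¬ (a ≤ x ∧ x ≤ b) → C x = 1) (hlam : 1 < ‖lam‖)
    {η ψ : QWState} {M : ℝ} (hM : ∀ x i, ‖η x i‖ ≤ M) (hψ : SupportedIn a b ψ)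
    (hηψ : ∀ x i, qwalk C η x i - lam * η x i = ψ x i) (x : ℤ) (i : Fin 2) :
    jind a b x * qwalk C (fun y j => jind a b y * η y j) x i - lam * (jind a b x * η x i)
      = ψ x i := by
  obtain ⟨hL, hR⟩ := tails_eq_zero_of_qwalk_eq_smul hC hlam hM fun x hx i => by
    linear_combination hηψ x i + hψ x hx i
  by_cases hx : a ≤ x ∧ x ≤ b
  · rw [jind_eq_one hx, one_mul, one_mul, qwalk_cutoff_apply_of_mem hC hL hR hx, hηψ]
  · rw [jind_eq_zero hx, hψ x hx i]
    ring

lemma cutoff_eq_of_qwalk_sub_smul_eq (hCu : ∀ x, C x ∈ Matrix.unitaryGroup (Fin 2) ℂ)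
    (hC : ∀ x, ¬ (a ≤ x ∧ x ≤ b) → C x = 1) (hlam : 1 < ‖lam‖) {η θ : QWState} {M : ℝ}
    (hM : ∀ x i, ‖η x i‖ ≤ M) (hθ : SupportedIn a b θ)
    (hηθ : ∀ x i, qwalk C η x i - lam * η x i = jind a b x * qwalk C θ x i - lam * θ x i)
    (x : ℤ) (i : Fin 2) : jind a b x * η x i = θ x i := by
  obtain ⟨hL, hR⟩ := tails_eq_zero_of_qwalk_eq_smul hC hlam hM fun x hx i => by
    have h := hηθ x i
    rw [jind_eq_zero hx, hθ x hx i] at h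
    linear_combination h
  set η' : QWState := fun y j => jind a b y * η y j
  have hφ : SupportedIn a b (η' - θ) := fun y hy j => by
    simp [η', jind_eq_zero hy, hθ y hy j]
  have heig : ∀ y j, jind a b y * qwalk C (η' - θ) y j = lam * (η' - θ) y j := by
    intro y j
    by_cases hy : a ≤ y ∧ y ≤ b
    · rw [qwalk_sub, Pi.sub_apply, Pi.sub_apply, qwalk_cutoff_apply_of_mem hC hL hR hy]
      simp only [η', Pi.sub_apply, jind_eq_one hy, one_mul]
      linear_combination hηθ y j + qwalk C θ y j * jind_eq_one hy
    · simp [η', jind_eq_zero hy, hθ y hy j]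
  simpa [η', sub_eq_zero] using
    congrFun (congrFun (eq_zero_of_cutoff_qwalk_eq_smul hCu hlam hφ heig) x) i

end QuantumWalk

/-- The cut-off resolvent inverts the cut-off walk: for J = [a,b] ⊇ chs(C−I₂) and |λ| > 1,
(1_J U 1_J − λ)(1_J(U−λ)⁻¹1_J ψ) = 1_J ψ, and on states supported in J the cut-off
resolvent is a two-sided inverse of 1_J U 1_J − λ. -/
theorem cutoff_resolvent_inverts_cutoff_walk
    (C : ℤ → Matrix (Fin 2) (Fin 2) ℂ) (hC : CoinAssumption C)
    (a b : ℤ) (hJC : ∀ x ∈ chsSet C, a ≤ x ∧ x ≤ b)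
    (Uop : H2 →L[ℂ] H2)
    (hU : ∀ ψ : H2, ∀ x : ℤ, ∀ i : Fin 2,
      ev (Uop ψ) x i = qwalk C (fun y => ev ψ y) x i) :
    ∀ lam : ℂ, 1 < ‖lam‖ →
      -- right inverse: if ψ is supported in J and (U−λ)η = ψ, then
      -- (1_J U 1_J)(1_J η) − λ(1_J η) = ψ
      (∀ ψ η : H2,
        (∀ x : ℤ, ¬ (a ≤ x ∧ x ≤ b) → ∀ i : Fin 2, ev ψ x i = 0) →
        (∀ x : ℤ, ∀ i : Fin 2, ev (Uop η) x i - lam * ev η x i = ev ψ x i) →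
        ∀ x : ℤ, ∀ i : Fin 2,
          jind a b x * qwalk C (fun y j => jind a b y * ev η y j) x i
              - lam * (jind a b x * ev η x i)
            = ev ψ x i) ∧
      -- left inverse: if θ is supported in J and (U−λ)η = (1_J U 1_J − λ)θ,
      -- then 1_J η = θ
      (∀ θ η : H2,
        (∀ x : ℤ, ¬ (a ≤ x ∧ x ≤ b) → ∀ i : Fin 2, ev θ x i = 0) →
        (∀ x : ℤ, ∀ i : Fin 2, ev (Uop η) x i - lam * ev η x i
          = jind a b x * qwalk C (fun y j => ev θ y j) x i - lam * ev θ x i) →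
        ∀ x : ℤ, ∀ i : Fin 2, jind a b x * ev η x i = ev θ x i) := by
  have hCone : ∀ x, ¬ (a ≤ x ∧ x ≤ b) → C x = 1 := fun x hx =>
    by_contra fun h => hx (hJC x ⟨x, x, h, h, le_rfl, le_rfl⟩)
  intro lam hlam
  refine ⟨fun ψ η hψ hηψ => ?_, fun θ η hθ hηθ => ?_⟩
  · simp only [hU] at hηψ
    exact cutoff_qwalk_sub_smul_cutoff hCone hlam (norm_ev_le η) hψ hηψ
  · simp only [hU] at hηθ
    exact cutoff_eq_of_qwalk_sub_smul_eq hC.unitary hCone hlam (norm_ev_le η) hθ hηθ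
end
end

section
/- Let C : ℤ → U(2) satisfy the standing Assumption, let U = S∘C, and let J be a bounded interval with J ⊇ chs(C−I₂). Then for every λ ∈ ℂ∖{0}, the following are equivalent: (i) there exists a nonzero outgoing map φ : ℤ → ℂ² with Uφ = λφ; (ii) λ is an eigenvalue of the operator 1_J U 1_J acting on the finite-dimensional space of maps ℤ → ℂ² supported in J, i.e. there exists a nonzero ψ : ℤ → ℂ² supported in J ∩ ℤ with 1_J(Uψ) = λψ. -/
noncomputable section

open scoped ComplexConjugate

lemma qwalk_apply0 (C : ℤ → Matrix (Fin 2) (Fin 2) ℂ) (φ : QWState) (x : ℤ) :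
    qwalk C φ x 0 = (C (x+1)).mulVec (φ (x+1)) 0 := rfl

lemma qwalk_apply1 (C : ℤ → Matrix (Fin 2) (Fin 2) ℂ) (φ : QWState) (x : ℤ) :
    qwalk C φ x 1 = (C (x-1)).mulVec (φ (x-1)) 1 := rfl

lemma tail_L (C : ℤ → Matrix (Fin 2) (Fin 2) ℂ) (φ : QWState) (lam : ℂ) (hlam : lam ≠ 0)
    (b r : ℤ) (hCb : ∀ y, b < y → C y = 1)
    (heig : ∀ x i, qwalk C φ x i = lam * φ x i)
    (hr : ∀ x, r < x → φ x 0 = 0) :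
    ∀ x, b ≤ x → φ x 0 = 0 := by
  intro x hx
  have key : ∀ k : ℕ, φ (x + k) 0 = lam ^ k * φ x 0 := by
    intro k
    induction k with
    | zero => simp
    | succ n ih =>
      have h := heig (x + n) 0
      rw [qwalk_apply0, hCb _ (by omega), Matrix.one_mulVec] at h
      have hcast : (x + ((n+1 : ℕ) : ℤ)) = x + (n : ℤ) + 1 := by push_cast; ring
      rw [hcast, h, ih, pow_succ]
      ring
  have hk : r < x + ((r - x).toNat + 1 : ℕ) := by
    have := Int.self_le_toNat (r - x)
    push_cast
    omega
  have h0 := hr _ hk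
  rw [key ((r - x).toNat + 1)] at h0
  exact (mul_eq_zero.mp h0).resolve_left (pow_ne_zero _ hlam)

lemma tail_R (C : ℤ → Matrix (Fin 2) (Fin 2) ℂ) (φ : QWState) (lam : ℂ) (hlam : lam ≠ 0)
    (a s : ℤ) (hCa : ∀ y, y < a → C y = 1)
    (heig : ∀ x i, qwalk C φ x i = lam * φ x i)
    (hs : ∀ x, x < s → φ x 1 = 0) :
    ∀ x, x ≤ a → φ x 1 = 0 := by
  intro x hx
  have key : ∀ k : ℕ, φ (x - k) 1 = lam ^ k * φ x 1 := by
    intro k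
    induction k with
    | zero => simp
    | succ n ih =>
      have h := heig (x - n) 1
      rw [qwalk_apply1, hCa _ (by omega), Matrix.one_mulVec] at h
      have hcast : (x - ((n+1 : ℕ) : ℤ)) = x - (n : ℤ) - 1 := by push_cast; ring
      rw [hcast, h, ih, pow_succ]
      ring
  have hk : x - ((x - s).toNat + 1 : ℕ) < s := by
    have := Int.self_le_toNat (x - s)
    push_cast
    omega
  have h0 := hs _ hk
  rw [key ((x - s).toNat + 1)] at h0
  exact (mul_eq_zero.mp h0).resolve_left (pow_ne_zero _ hlam)

lemma prop_R (C : ℤ → Matrix (Fin 2) (Fin 2) ℂ) (φ : QWState) (lam : ℂ) (hlam : lam ≠ 0)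
    (b : ℤ) (heig : ∀ x i, qwalk C φ x i = lam * φ x i)
    (hb0 : ∀ y, b ≤ y → φ y 0 = 0) (hb1 : φ b 1 = 0) :
    ∀ x, b ≤ x → φ x 1 = 0 := by
  have key : ∀ k : ℕ, φ (b + k) 1 = 0 := by
    intro k
    induction k with
    | zero => simpa using hb1
    | succ n ih =>
      have h := heig (b + ((n+1 : ℕ) : ℤ)) 1
      have hz : φ (b + ((n+1 : ℕ) : ℤ) - 1) = 0 := by
        have hcast : b + ((n+1 : ℕ) : ℤ) - 1 = b + (n : ℤ) := by push_cast; ring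
        rw [hcast]
        funext j
        fin_cases j
        · exact hb0 _ (by omega)
        · exact ih
      rw [qwalk_apply1, hz, Matrix.mulVec_zero] at h
      have h2 : (0 : Fin 2 → ℂ) 1 = lam * φ (b + ((n+1:ℕ):ℤ)) 1 := h
      simpa [hlam] using h2.symm
  intro x hx
  have hcast : x = b + ((x - b).toNat : ℤ) := by omega
  rw [hcast]
  exact key _

lemma prop_L (C : ℤ → Matrix (Fin 2) (Fin 2) ℂ) (φ : QWState) (lam : ℂ) (hlam : lam ≠ 0)
    (a : ℤ) (heig : ∀ x i, qwalk C φ x i = lam * φ x i)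
    (ha1 : ∀ y, y ≤ a → φ y 1 = 0) (ha0 : φ a 0 = 0) :
    ∀ x, x ≤ a → φ x 0 = 0 := by
  have key : ∀ k : ℕ, φ (a - k) 0 = 0 := by
    intro k
    induction k with
    | zero => simpa using ha0
    | succ n ih =>
      have h := heig (a - ((n+1 : ℕ) : ℤ)) 0
      have hz : φ (a - ((n+1 : ℕ) : ℤ) + 1) = 0 := by
        have hcast : a - ((n+1 : ℕ) : ℤ) + 1 = a - (n : ℤ) := by push_cast; ring
        rw [hcast]
        funext j
        fin_cases j
        · exact ih
        · exact ha1 _ (by omega)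
      rw [qwalk_apply0, hz, Matrix.mulVec_zero] at h
      have h2 : (0 : Fin 2 → ℂ) 0 = lam * φ (a - ((n+1:ℕ):ℤ)) 0 := h
      simpa [hlam] using h2.symm
  intro x hx
  have hcast : x = a - ((a - x).toNat : ℤ) := by omega
  rw [hcast]
  exact key _

lemma jind_pos {a b x : ℤ} (h : a ≤ x ∧ x ≤ b) : jind a b x = 1 := if_pos h

lemma jind_neg {a b x : ℤ} (h : ¬ (a ≤ x ∧ x ≤ b)) : jind a b x = 0 := if_neg h

/-- Characterization of nonzero resonances as eigenvalues of the cut-off evolution 1_J U 1_J: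
for λ ≠ 0 and a bounded interval J = [a,b] ⊇ chs(C−I₂), there is a nonzero outgoing
eigenfunction of U iff λ is an eigenvalue of 1_J U 1_J on states supported in J. -/
theorem resonance_iff_eigenvalue_of_cutoff
    (C : ℤ → Matrix (Fin 2) (Fin 2) ℂ) (hC : CoinAssumption C)
    (a b : ℤ) (hJC : ∀ x ∈ chsSet C, a ≤ x ∧ x ≤ b)
    (lam : ℂ) (hlam : lam ≠ 0) :
    (∃ φ : QWState, (∃ x : ℤ, ∃ i : Fin 2, φ x i ≠ 0) ∧ Outgoing φ ∧
        (∀ x : ℤ, ∀ i : Fin 2, qwalk C φ x i = lam * φ x i))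
      ↔ (∃ ψ : QWState, (∃ x : ℤ, ∃ i : Fin 2, ψ x i ≠ 0) ∧
          (∀ x : ℤ, ¬ (a ≤ x ∧ x ≤ b) → ∀ i : Fin 2, ψ x i = 0) ∧
          (∀ x : ℤ, ∀ i : Fin 2, jind a b x * qwalk C ψ x i = lam * ψ x i)) := by
  have hC1 : ∀ y : ℤ, (y < a ∨ b < y) → C y = 1 := by
    intro y hy
    by_contra h
    have := hJC y ⟨y, y, h, h, le_rfl, le_rfl⟩
    omega
  constructor
  · rintro ⟨φ, ⟨x0, i0, hx0⟩, ⟨r, hrpos, hout⟩, heig⟩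
    have hrL : ∀ x, r < x → φ x 0 = 0 := fun x hx => (hout x hx).1
    have hrR : ∀ x, x < -r → φ x 1 = 0 := by
      intro x hx
      have := (hout (-x) (by omega)).2
      simpa using this
    rcases le_or_gt a b with hab | hab
    · -- main case
      have Hb : ∀ x, b ≤ x → φ x 0 = 0 :=
        tail_L C φ lam hlam b r (fun y hy => hC1 y (Or.inr hy)) heig hrL
      have Ha : ∀ x, x ≤ a → φ x 1 = 0 :=
        tail_R C φ lam hlam a (-r) (fun y hy => hC1 y (Or.inl hy)) heig hrR
      set ψ : QWState := fun y i => jind a b y * φ y i with hψdef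
      have hψJ : ∀ y, a ≤ y ∧ y ≤ b → ψ y = φ y := by
        intro y hy
        funext j
        simp [hψdef, jind_pos hy]
      have hψout : ∀ y, ¬ (a ≤ y ∧ y ≤ b) → ψ y = 0 := by
        intro y hy
        funext j
        simp [hψdef, jind_neg hy]
      refine ⟨ψ, ?_, fun x hx i => congrFun (hψout x hx) i, ?_⟩
      · -- nonzero
        by_contra hz
        push_neg at hz
        have hzJ : ∀ x, a ≤ x → x ≤ b → ∀ i, φ x i = 0 := by
          intro x h1 h2 i
          have h := hz x i
          rwa [congrFun (hψJ x ⟨h1, h2⟩) i] at h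
        have HR1 : ∀ x, b ≤ x → φ x 1 = 0 :=
          prop_R C φ lam hlam b heig Hb (hzJ b hab le_rfl 1)
        have HL0 : ∀ x, x ≤ a → φ x 0 = 0 :=
          prop_L C φ lam hlam a heig Ha (hzJ a le_rfl hab 0)
        apply hx0
        rcases le_or_gt x0 b with h1 | h1
        · rcases le_or_gt a x0 with h2 | h2
          · exact hzJ x0 h2 h1 i0
          · fin_cases i0
            · exact HL0 x0 (by omega)
            · exact Ha x0 (by omega)
        · fin_cases i0
          · exact Hb x0 (by omega)
          · exact HR1 x0 (by omega)
      · -- eigen equation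
        intro x i
        rcases Classical.em (a ≤ x ∧ x ≤ b) with hxJ | hxJ
        · rw [jind_pos hxJ, one_mul]
          have m0 : qwalk C ψ x 0 = lam * ψ x 0 := by
            rw [qwalk_apply0]
            rcases lt_or_ge x b with hlt | hge
            · rw [hψJ (x+1) (by omega), ← qwalk_apply0, heig, hψJ x hxJ]
            · rw [hψout (x+1) (by omega), Matrix.mulVec_zero, hψJ x hxJ]
              have hb0 : φ x 0 = 0 := Hb x (by omega)
              simp [hb0]
          have m1 : qwalk C ψ x 1 = lam * ψ x 1 := by
            rw [qwalk_apply1]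
            rcases lt_or_ge a x with hlt | hge
            · rw [hψJ (x-1) (by omega), ← qwalk_apply1, heig, hψJ x hxJ]
            · rw [hψout (x-1) (by omega), Matrix.mulVec_zero, hψJ x hxJ]
              have ha1 : φ x 1 = 0 := Ha x (by omega)
              simp [ha1]
          fin_cases i
          · exact m0
          · exact m1
        · rw [jind_neg hxJ, zero_mul, congrFun (hψout x hxJ) i]
          simp
    · -- degenerate case a > b : contradiction with nonzero outgoing eigenfunction
      exfalso
      have hCall : ∀ y : ℤ, C y = 1 := fun y => hC1 y (by omega)
      apply hx0
      fin_cases i0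
      · exact tail_L C φ lam hlam x0 r (fun y _ => hCall y) heig hrL x0 le_rfl
      · exact tail_R C φ lam hlam x0 (-r) (fun y _ => hCall y) heig hrR x0 le_rfl
  · rintro ⟨ψ, ⟨x0, i0, hx0⟩, hsupp, heig⟩
    have hx0J : a ≤ x0 ∧ x0 ≤ b := by
      by_contra h
      exact hx0 (hsupp x0 h i0)
    have hab : a ≤ b := by omega
    -- boundary vanishing of ψ
    have hψb0 : ψ b 0 = 0 := by
      have h := heig b 0
      have hz : ψ (b+1) = 0 := funext fun j => hsupp (b+1) (by omega) j
      rw [qwalk_apply0, hz, Matrix.mulVec_zero] at h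
      have h2 : jind a b b * (0 : Fin 2 → ℂ) 0 = lam * ψ b 0 := h
      simp only [Pi.zero_apply, mul_zero] at h2
      exact (mul_eq_zero.mp h2.symm).resolve_left hlam
    have hψa1 : ψ a 1 = 0 := by
      have h := heig a 1
      have hz : ψ (a-1) = 0 := funext fun j => hsupp (a-1) (by omega) j
      rw [qwalk_apply1, hz, Matrix.mulVec_zero] at h
      have h2 : jind a b a * (0 : Fin 2 → ℂ) 1 = lam * ψ a 1 := h
      simp only [Pi.zero_apply, mul_zero] at h2
      exact (mul_eq_zero.mp h2.symm).resolve_left hlam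
    set R : ℂ := (C b).mulVec (ψ b) 1 with hR
    set L : ℂ := (C a).mulVec (ψ a) 0 with hL
    set φ : QWState := fun x i =>
      if a ≤ x ∧ x ≤ b then ψ x i
      else if b < x then (if i = 0 then 0 else lam⁻¹ ^ (x - b).toNat * R)
      else (if i = 1 then 0 else lam⁻¹ ^ (a - x).toNat * L) with hφ
    have hφJ : ∀ x, a ≤ x ∧ x ≤ b → φ x = ψ x := by
      intro x hx
      funext i
      simp [hφ, hx]
    have hφR0 : ∀ x, b < x → φ x 0 = 0 := by
      intro x hx
      simp [hφ, hx, (show ¬ (a ≤ x ∧ x ≤ b) by omega)]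
    have hφR1 : ∀ x, b < x → φ x 1 = lam⁻¹ ^ (x - b).toNat * R := by
      intro x hx
      simp [hφ, hx, (show ¬ (a ≤ x ∧ x ≤ b) by omega)]
    have hφL1 : ∀ x, x < a → φ x 1 = 0 := by
      intro x hx
      simp [hφ, (show ¬ (a ≤ x ∧ x ≤ b) by omega), (show ¬ b < x by omega)]
    have hφL0 : ∀ x, x < a → φ x 0 = lam⁻¹ ^ (a - x).toNat * L := by
      intro x hx
      simp [hφ, (show ¬ (a ≤ x ∧ x ≤ b) by omega), (show ¬ b < x by omega)]
    have hpow : ∀ n : ℕ, lam * lam⁻¹ ^ (n + 1) = lam⁻¹ ^ n := by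
      intro n
      rw [pow_succ]
      field_simp
    refine ⟨φ, ⟨x0, i0, ?_⟩, ⟨|a| + |b| + 1, by positivity, ?_⟩, ?_⟩
    · rw [congrFun (hφJ x0 hx0J) i0]
      exact hx0
    · -- outgoing
      intro x hx
      have hb' : b ≤ |b| := le_abs_self b
      have ha' : -|a| ≤ a := neg_abs_le a
      have ha0 : (0:ℤ) ≤ |a| := abs_nonneg a
      have hb0 : (0:ℤ) ≤ |b| := abs_nonneg b
      constructor
      · exact hφR0 x (by linarith)
      · exact hφL1 (-x) (by linarith)
    · -- eigen equation for φ
      intro x i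
      have m0 : qwalk C φ x 0 = lam * φ x 0 := by
        rw [qwalk_apply0]
        rcases Classical.em (b < x) with hxb | hxb
        · rw [hC1 (x+1) (Or.inr (by omega)), Matrix.one_mulVec,
            hφR0 x hxb, hφR0 (x+1) (by omega), mul_zero]
        · rcases Classical.em (a ≤ x) with hax | hax
          · -- a ≤ x ≤ b
            rcases lt_or_ge x b with hlt | hge
            · rw [hφJ (x+1) (by omega), ← qwalk_apply0]
              have h := heig x 0
              rw [jind_pos (by omega), one_mul] at h
              rw [h, hφJ x (by omega)]
            · -- x = b
              rw [hC1 (x+1) (Or.inr (by omega)), Matrix.one_mulVec,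
                hφR0 (x+1) (by omega), hφJ x (by omega)]
              rw [show x = b by omega, hψb0, mul_zero]
          · -- x < a
            push_neg at hax
            rcases lt_or_ge (x+1) a with hlt | hge
            · rw [hC1 (x+1) (Or.inl hlt), Matrix.one_mulVec,
                hφL0 x (by omega), hφL0 (x+1) (by omega)]
              rw [show (a - x).toNat = (a - (x+1)).toNat + 1 by omega, ← mul_assoc, hpow]
            · -- x + 1 = a
              rw [hφJ (x+1) (by omega), hφL0 x (by omega)]
              rw [show (a - x).toNat = 1 by omega, pow_one, ← mul_assoc,
                mul_inv_cancel₀ hlam, one_mul]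
              rw [show x + 1 = a by omega, hL]
      have m1 : qwalk C φ x 1 = lam * φ x 1 := by
        rw [qwalk_apply1]
        rcases Classical.em (x < a) with hxa | hxa
        · rw [hC1 (x-1) (Or.inl (by omega)), Matrix.one_mulVec,
            hφL1 x hxa, hφL1 (x-1) (by omega), mul_zero]
        · push_neg at hxa
          rcases Classical.em (x ≤ b) with hxb | hxb
          · -- a ≤ x ≤ b
            rcases lt_or_ge a x with hlt | hge
            · rw [hφJ (x-1) (by omega), ← qwalk_apply1]
              have h := heig x 1
              rw [jind_pos (by omega), one_mul] at h
              rw [h, hφJ x (by omega)]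
            · -- x = a
              rw [hC1 (x-1) (Or.inl (by omega)), Matrix.one_mulVec,
                hφL1 (x-1) (by omega), hφJ x (by omega)]
              rw [show x = a by omega, hψa1, mul_zero]
          · -- b < x
            push_neg at hxb
            rcases lt_or_ge b (x-1) with hlt | hge
            · rw [hC1 (x-1) (Or.inr hlt), Matrix.one_mulVec,
                hφR1 x (by omega), hφR1 (x-1) (by omega)]
              rw [show (x - b).toNat = ((x-1) - b).toNat + 1 by omega, ← mul_assoc, hpow]
            · -- x - 1 = b
              rw [hφJ (x-1) (by omega), hφR1 x (by omega)]
              rw [show (x - b).toNat = 1 by omega, pow_one, ← mul_assoc,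
                mul_inv_cancel₀ hlam, one_mul]
              rw [show x - 1 = b by omega, hR]
      fin_cases i
      · exact m0
      · exact m1
end
end

section
/- Let C : ℤ → U(2) satisfy the standing Assumption and suppose that the number of x ∈ ℤ for which C(x) is not a diagonal matrix is at most one. Let U = S∘C. Then for every λ ∈ ℂ∖{0}, every outgoing map φ : ℤ → ℂ² satisfying Uφ = λφ is identically zero (i.e. U has no nonzero resonance). -/
noncomputable section

open scoped ComplexConjugate

/-- If at most one coin is non-diagonal, there is no nonzero resonance:
every outgoing solution of Uφ = λφ with λ ≠ 0 vanishes identically. -/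
theorem no_resonance_of_le_one_nondiagonal
    (C : ℤ → Matrix (Fin 2) (Fin 2) ℂ) (hC : CoinAssumption C)
    (hdiag : Set.Subsingleton {x : ℤ | ¬ (C x 0 1 = 0 ∧ C x 1 0 = 0)})
    (lam : ℂ) (hlam : lam ≠ 0)
    (φ : QWState) (hout : Outgoing φ)
    (heig : ∀ x : ℤ, ∀ i : Fin 2, qwalk C φ x i = lam * φ x i) :
    ∀ x : ℤ, ∀ i : Fin 2, φ x i = 0 := by
  classical
  obtain ⟨r, hr, hro⟩ := hout
  -- eigenvalue equations, componentwise
  have e0 : ∀ x : ℤ, lam * φ x 0 =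
      C (x+1) 0 0 * φ (x+1) 0 + C (x+1) 0 1 * φ (x+1) 1 := by
    intro x
    have := heig x 0
    simp [qwalk, Matrix.mulVec, dotProduct, Fin.sum_univ_two] at this
    rw [← this]
  have e1 : ∀ x : ℤ, lam * φ x 1 =
      C (x-1) 1 0 * φ (x-1) 0 + C (x-1) 1 1 * φ (x-1) 1 := by
    intro x
    have := heig x 1
    simp [qwalk, Matrix.mulVec, dotProduct, Fin.sum_univ_two] at this
    rw [← this]
  -- pick the (at most one) nondiagonal site
  obtain ⟨x0, hd⟩ : ∃ x0 : ℤ, ∀ y : ℤ, y ≠ x0 → C y 0 1 = 0 ∧ C y 1 0 = 0 := by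
    by_cases hne : ∃ z : ℤ, ¬ (C z 0 1 = 0 ∧ C z 1 0 = 0)
    · obtain ⟨z, hz⟩ := hne
      refine ⟨z, fun y hy => ?_⟩
      by_contra hy'
      exact hy (hdiag hy' hz)
    · push_neg at hne
      exact ⟨0, fun y _ => hne y⟩
  -- left component vanishes for x ≥ x0
  have hL : ∀ x : ℤ, x0 ≤ x → φ x 0 = 0 := by
    have key : ∀ n : ℕ, ∀ x : ℤ, x0 ≤ x → r < x + n → φ x 0 = 0 := by
      intro n
      induction n with
      | zero => intro x _ hrx; exact (hro x (by omega)).1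
      | succ n ih =>
        intro x hx hrx
        by_cases h : r < x
        · exact (hro x h).1
        · have h1 : φ (x+1) 0 = 0 := ih (x+1) (by omega) (by omega)
          have hdg := hd (x+1) (by omega)
          have := e0 x
          rw [h1, hdg.1] at this
          simpa [hlam] using this.symm
    intro x hx
    exact key (r + 1 - x).toNat x hx (by omega)
  -- right component vanishes for x ≤ x0
  have hR : ∀ x : ℤ, x ≤ x0 → φ x 1 = 0 := by
    have key : ∀ n : ℕ, ∀ x : ℤ, x ≤ x0 → x < -r + n → φ x 1 = 0 := by
      intro n
      induction n with
      | zero =>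
        intro x _ hrx
        have := (hro (-x) (by omega)).2
        simpa using this
      | succ n ih =>
        intro x hx hrx
        by_cases h : x < -r
        · have := (hro (-x) (by omega)).2
          simpa using this
        · have h1 : φ (x-1) 1 = 0 := ih (x-1) (by omega) (by omega)
          have hdg := hd (x-1) (by omega)
          have := e1 x
          rw [h1, hdg.2] at this
          simpa [hlam] using this.symm
    intro x hx
    exact key (x + r + 1).toNat x hx (by omega)
  -- left component vanishes everywhere
  have hLall : ∀ x : ℤ, φ x 0 = 0 := by
    have key : ∀ n : ℕ, ∀ x : ℤ, x0 ≤ x + n → φ x 0 = 0 := by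
      intro n
      induction n with
      | zero => intro x hx; exact hL x (by omega)
      | succ n ih =>
        intro x hx
        by_cases h : x0 ≤ x
        · exact hL x h
        · have h0 : φ (x+1) 0 = 0 := ih (x+1) (by omega)
          have h1 : φ (x+1) 1 = 0 := hR (x+1) (by omega)
          have := e0 x
          rw [h0, h1] at this
          simpa [hlam] using this.symm
    intro x
    exact key (x0 - x).toNat x (by omega)
  -- right component vanishes everywhere
  have hRall : ∀ x : ℤ, φ x 1 = 0 := by
    have key : ∀ n : ℕ, ∀ x : ℤ, x ≤ x0 + n → φ x 1 = 0 := by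
      intro n
      induction n with
      | zero => intro x hx; exact hR x (by omega)
      | succ n ih =>
        intro x hx
        by_cases h : x ≤ x0
        · exact hR x h
        · have h0 : φ (x-1) 0 = 0 := hLall (x-1)
          have h1 : φ (x-1) 1 = 0 := ih (x-1) (by omega)
          have := e1 x
          rw [h0, h1] at this
          simpa [hlam] using this.symm
    intro x
    exact key (x - x0).toNat x (by omega)
  intro x i
  fin_cases i
  · exact hLall x
  · exact hRall x
end
end

section
/- (Double barrier: quasi-periodicity.) Let N ≥ 1, let C : ℤ → U(2) satisfy the standing Assumption, assume C(x) is diagonal for every x ∈ ℤ∖{0,N} and that supp(C−I₂) ⊆ [0,N], and let U = S∘C. Set α = c₂₁(0)·c₁₂(N)·∏_{x=1}^{N−1} det C(x). Then for every ψ : ℤ → ℂ² with ψ^R(x) = 0 for all x < 1 and ψ^L(x) = 0 for all x > N−1 (i.e. supp♭ψ ⊆ [1, N−1]), every n ∈ ℕ, and every x ∈ {0, 1, …, N}: U^{n+2N}ψ(x) = α · U^n ψ(x). -/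
noncomputable section

open scoped ComplexConjugate

namespace DBaux

variable (C : ℤ → Matrix (Fin 2) (Fin 2) ℂ)

lemma qwalk0 (ψ : QWState) (x : ℤ) :
    qwalk C ψ x 0 = C (x+1) 0 0 * ψ (x+1) 0 + C (x+1) 0 1 * ψ (x+1) 1 := by
  simp [qwalk, Matrix.mulVec, dotProduct, Fin.sum_univ_two]

lemma qwalk1 (ψ : QWState) (x : ℤ) :
    qwalk C ψ x 1 = C (x-1) 1 0 * ψ (x-1) 0 + C (x-1) 1 1 * ψ (x-1) 1 := by
  simp [qwalk, Matrix.mulVec, dotProduct, Fin.sum_univ_two]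

def Inv (N : ℤ) (χ : QWState) : Prop :=
  (∀ x : ℤ, x < 1 → χ x 1 = 0) ∧ (∀ x : ℤ, N - 1 < x → χ x 0 = 0)

variable {C} {N : ℤ}

lemma inv_step (hN : 1 ≤ N) (hone : ∀ x : ℤ, x < 0 ∨ N < x → C x = 1)
    {χ : QWState} (h : Inv N χ) : Inv N (qwalk C χ) := by
  constructor
  · intro x hx
    rw [qwalk1, hone (x-1) (Or.inl (by omega)), h.1 (x-1) (by omega)]
    simp [Matrix.one_apply]
  · intro x hx
    rw [qwalk0, hone (x+1) (Or.inr (by omega)), h.2 (x+1) (by omega)]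
    simp [Matrix.one_apply]

lemma inv_iter (hN : 1 ≤ N) (hone : ∀ x : ℤ, x < 0 ∨ N < x → C x = 1)
    {χ : QWState} (h : Inv N χ) (k : ℕ) : Inv N ((qwalk C)^[k] χ) := by
  induction k with
  | zero => exact h
  | succ k ih => rw [Function.iterate_succ_apply']; exact inv_step hN hone ih

lemma claimA (hdiag : ∀ x : ℤ, x ≠ 0 → x ≠ N → C x 0 1 = 0 ∧ C x 1 0 = 0) :
    ∀ (k : ℕ) (ψ : QWState) (x : ℤ), 0 ≤ x → x + k ≤ N - 1 →
      (qwalk C)^[k] ψ x 0 = (∏ y ∈ Finset.Icc (x+1) (x+k), C y 0 0) * ψ (x+k) 0 := by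
  intro k
  induction k with
  | zero =>
    intro ψ x hx hxk
    simp
  | succ k ih =>
    intro ψ x hx hxk
    rw [Function.iterate_succ_apply', qwalk0]
    rw [(hdiag (x+1) (by omega) (by push_cast at hxk; omega)).1]
    rw [ih ψ (x+1) (by omega) (by push_cast at hxk ⊢; omega)]
    push_cast
    rw [show x + ((k:ℤ)+1) = x+1+(k:ℤ) by ring]
    rw [show Finset.Icc (x+1) (x+1+(k:ℤ))
        = insert (x+1) (Finset.Icc (x+1+1) (x+1+(k:ℤ))) by
      ext y; simp only [Finset.mem_Icc, Finset.mem_insert]; omega]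
    rw [Finset.prod_insert (by simp only [Finset.mem_Icc]; omega)]
    ring

lemma claimB (hdiag : ∀ x : ℤ, x ≠ 0 → x ≠ N → C x 0 1 = 0 ∧ C x 1 0 = 0) :
    ∀ (k : ℕ) (ψ : QWState) (x : ℤ), x ≤ N → (k:ℤ) ≤ x - 1 →
      (qwalk C)^[k] ψ x 1 = (∏ y ∈ Finset.Icc (x-k) (x-1), C y 1 1) * ψ (x-k) 1 := by
  intro k
  induction k with
  | zero =>
    intro ψ x hx hxk
    simp
  | succ k ih =>
    intro ψ x hx hxk
    rw [Function.iterate_succ_apply', qwalk1]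
    rw [(hdiag (x-1) (by push_cast at hxk; omega) (by omega)).2]
    rw [ih ψ (x-1) (by omega) (by push_cast at hxk ⊢; omega)]
    push_cast
    rw [show x - ((k:ℤ)+1) = x-1-(k:ℤ) by ring]
    rw [show Finset.Icc (x-1-(k:ℤ)) (x-1)
        = insert (x-1) (Finset.Icc (x-1-(k:ℤ)) (x-1-1)) by
      ext y; simp only [Finset.mem_Icc, Finset.mem_insert]; omega]
    rw [Finset.prod_insert (by simp only [Finset.mem_Icc]; omega)]
    ring

lemma prod_split (f : ℤ → ℂ) (a b c : ℤ) (h1 : a - 1 ≤ b) (h2 : b ≤ c) :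
    (∏ y ∈ Finset.Icc a b, f y) * ∏ y ∈ Finset.Icc (b+1) c, f y
      = ∏ y ∈ Finset.Icc a c, f y := by
  rw [← Finset.prod_union]
  · congr 1
    ext y
    simp only [Finset.mem_union, Finset.mem_Icc]
    omega
  · rw [Finset.disjoint_left]
    intro y hy hy'
    simp only [Finset.mem_Icc] at hy hy'
    omega

lemma key (hN : 1 ≤ N) (hone : ∀ x : ℤ, x < 0 ∨ N < x → C x = 1)
    (hdiag : ∀ x : ℤ, x ≠ 0 → x ≠ N → C x 0 1 = 0 ∧ C x 1 0 = 0)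
    (φ : QWState) (hφ : Inv N φ) (x : ℤ) (hx0 : 0 ≤ x) (hxN : x ≤ N) (i : Fin 2) :
    (qwalk C)^[2 * N.toNat] φ x i
      = (C 0 1 0 * C N 0 1 * ((∏ y ∈ Finset.Icc (1:ℤ) (N-1), C y 0 0)
          * ∏ y ∈ Finset.Icc (1:ℤ) (N-1), C y 1 1)) * φ x i := by
  have hNn : ((N.toNat : ℤ)) = N := Int.toNat_of_nonneg (by omega)
  set Nn := N.toNat with hNndef
  have h01 : i = 0 ∨ i = 1 := by fin_cases i; exacts [Or.inl rfl, Or.inr rfl]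
  rcases h01 with rfl | rfl
  · -- component L
    by_cases hxN' : x = N
    · rw [(inv_iter hN hone hφ _).2 x (by omega), hφ.2 x (by omega), mul_zero]
    have hx1 : x ≤ N - 1 := by omega
    set a := x.toNat with hadef
    have ha : (a : ℤ) = x := Int.toNat_of_nonneg hx0
    have e1 : (qwalk C)^[a] φ 0 0
        = (∏ y ∈ Finset.Icc (1:ℤ) x, C y 0 0) * φ x 0 := by
      have h := claimA hdiag a φ 0 le_rfl (by omega)
      rw [show (0:ℤ) + (a:ℤ) = x by omega, show (0:ℤ) + 1 = 1 by norm_num] at h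
      exact h
    have hφ1 : Inv N ((qwalk C)^[a] φ) := inv_iter hN hone hφ a
    have e2 : qwalk C ((qwalk C)^[a] φ) 1 1
        = C 0 1 0 * (qwalk C)^[a] φ 0 0 := by
      rw [qwalk1, show (1:ℤ) - 1 = 0 by norm_num, hφ1.1 0 (by norm_num)]
      ring
    have hφ2 : Inv N (qwalk C ((qwalk C)^[a] φ)) := inv_step hN hone hφ1
    have e3 : (qwalk C)^[Nn-1] (qwalk C ((qwalk C)^[a] φ)) N 1
        = (∏ y ∈ Finset.Icc (1:ℤ) (N-1), C y 1 1)
          * (qwalk C ((qwalk C)^[a] φ)) 1 1 := by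
      have h := claimB hdiag (Nn-1) (qwalk C ((qwalk C)^[a] φ)) N le_rfl (by omega)
      rw [show N - ((Nn-1 : ℕ) : ℤ) = 1 by omega] at h
      exact h
    have hφ3 : Inv N ((qwalk C)^[Nn-1] (qwalk C ((qwalk C)^[a] φ))) :=
      inv_iter hN hone hφ2 _
    have e4 : qwalk C ((qwalk C)^[Nn-1] (qwalk C ((qwalk C)^[a] φ))) (N-1) 0
        = C N 0 1 * ((qwalk C)^[Nn-1] (qwalk C ((qwalk C)^[a] φ))) N 1 := by
      rw [qwalk0, show N - 1 + 1 = N by ring, hφ3.2 N (by omega)]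
      ring
    have e5 : (qwalk C)^[Nn-1-a]
          (qwalk C ((qwalk C)^[Nn-1] (qwalk C ((qwalk C)^[a] φ)))) x 0
        = (∏ y ∈ Finset.Icc (x+1) (N-1), C y 0 0)
          * (qwalk C ((qwalk C)^[Nn-1] (qwalk C ((qwalk C)^[a] φ)))) (N-1) 0 := by
      have h := claimA hdiag (Nn-1-a)
        (qwalk C ((qwalk C)^[Nn-1] (qwalk C ((qwalk C)^[a] φ)))) x hx0 (by omega)
      rw [show x + ((Nn-1-a : ℕ) : ℤ) = N - 1 by omega] at h
      exact h
    rw [show 2 * Nn = (Nn-1-a) + (1 + ((Nn-1) + (1 + a))) by omega]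
    simp only [Function.iterate_add_apply, Function.iterate_one]
    rw [e5, e4, e3, e2, e1]
    rw [← prod_split (fun y => C y 0 0) 1 x (N-1) (by omega) (by omega)]
    ring
  · -- component R
    by_cases hx0' : x = 0
    · rw [(inv_iter hN hone hφ _).1 x (by omega), hφ.1 x (by omega), mul_zero]
    have hx1 : 1 ≤ x := by omega
    set a := x.toNat with hadef
    have ha : (a : ℤ) = x := Int.toNat_of_nonneg hx0
    have e1 : (qwalk C)^[Nn-a] φ N 1
        = (∏ y ∈ Finset.Icc x (N-1), C y 1 1) * φ x 1 := by
      have h := claimB hdiag (Nn-a) φ N le_rfl (by omega)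
      rw [show N - ((Nn-a : ℕ) : ℤ) = x by omega] at h
      exact h
    have hφ1 : Inv N ((qwalk C)^[Nn-a] φ) := inv_iter hN hone hφ _
    have e2 : qwalk C ((qwalk C)^[Nn-a] φ) (N-1) 0
        = C N 0 1 * ((qwalk C)^[Nn-a] φ) N 1 := by
      rw [qwalk0, show N - 1 + 1 = N by ring, hφ1.2 N (by omega)]
      ring
    have hφ2 : Inv N (qwalk C ((qwalk C)^[Nn-a] φ)) := inv_step hN hone hφ1
    have e3 : (qwalk C)^[Nn-1] (qwalk C ((qwalk C)^[Nn-a] φ)) 0 0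
        = (∏ y ∈ Finset.Icc (1:ℤ) (N-1), C y 0 0)
          * (qwalk C ((qwalk C)^[Nn-a] φ)) (N-1) 0 := by
      have h := claimA hdiag (Nn-1) (qwalk C ((qwalk C)^[Nn-a] φ)) 0 le_rfl (by omega)
      rw [show (0:ℤ) + ((Nn-1 : ℕ) : ℤ) = N - 1 by omega,
        show (0:ℤ) + 1 = 1 by norm_num] at h
      exact h
    have hφ3 : Inv N ((qwalk C)^[Nn-1] (qwalk C ((qwalk C)^[Nn-a] φ))) :=
      inv_iter hN hone hφ2 _
    have e4 : qwalk C ((qwalk C)^[Nn-1] (qwalk C ((qwalk C)^[Nn-a] φ))) 1 1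
        = C 0 1 0 * ((qwalk C)^[Nn-1] (qwalk C ((qwalk C)^[Nn-a] φ))) 0 0 := by
      rw [qwalk1, show (1:ℤ) - 1 = 0 by norm_num, hφ3.1 0 (by norm_num)]
      ring
    have e5 : (qwalk C)^[a-1]
          (qwalk C ((qwalk C)^[Nn-1] (qwalk C ((qwalk C)^[Nn-a] φ)))) x 1
        = (∏ y ∈ Finset.Icc (1:ℤ) (x-1), C y 1 1)
          * (qwalk C ((qwalk C)^[Nn-1] (qwalk C ((qwalk C)^[Nn-a] φ)))) 1 1 := by
      have h := claimB hdiag (a-1)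
        (qwalk C ((qwalk C)^[Nn-1] (qwalk C ((qwalk C)^[Nn-a] φ)))) x hxN (by omega)
      rw [show x - ((a-1 : ℕ) : ℤ) = 1 by omega] at h
      exact h
    rw [show 2 * Nn = (a-1) + (1 + ((Nn-1) + (1 + (Nn-a)))) by omega]
    simp only [Function.iterate_add_apply, Function.iterate_one]
    rw [e5, e4, e3, e2, e1]
    rw [show Finset.Icc x (N-1) = Finset.Icc ((x-1)+1) (N-1) by ring_nf]
    rw [← prod_split (fun y => C y 1 1) 1 (x-1) (N-1) (by omega) (by omega)]
    ring

end DBaux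

/-- Double barrier: quasi-periodicity.  With only the coins at 0 and N non-diagonal and
supp(C−I₂) ⊆ [0,N], every state with incoming support in [1,N−1] evolves 2N-quasi-periodically
on [0,N], with factor α = c₂₁(0)c₁₂(N)∏_{x=1}^{N−1} det C(x). -/
theorem double_barrier_quasi_periodicity
    (N : ℤ) (hN : 1 ≤ N)
    (C : ℤ → Matrix (Fin 2) (Fin 2) ℂ) (hC : CoinAssumption C)
    (hdiag : ∀ x : ℤ, x ≠ 0 → x ≠ N → C x 0 1 = 0 ∧ C x 1 0 = 0)
    (hsupp : ∀ x : ℤ, C x ≠ 1 → 0 ≤ x ∧ x ≤ N)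
    (ψ : QWState)
    (hψR : ∀ x : ℤ, x < 1 → ψ x 1 = 0)
    (hψL : ∀ x : ℤ, N - 1 < x → ψ x 0 = 0) :
    ∀ n : ℕ, ∀ x : ℤ, 0 ≤ x → x ≤ N → ∀ i : Fin 2,
      (qwalk C)^[n + 2 * N.toNat] ψ x i
        = (C 0 1 0 * C N 0 1 * ∏ y ∈ Finset.Icc (1:ℤ) (N - 1), (C y).det)
            * (qwalk C)^[n] ψ x i := by
  have hone : ∀ x : ℤ, x < 0 ∨ N < x → C x = 1 := by
    intro x hx
    by_contra h
    rcases hsupp x h with ⟨h1, h2⟩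
    omega
  intro n x hx0 hxN i
  rw [show n + 2 * N.toNat = 2 * N.toNat + n by omega, Function.iterate_add_apply]
  rw [DBaux.key hN hone hdiag ((qwalk C)^[n] ψ)
    (DBaux.inv_iter hN hone ⟨hψR, hψL⟩ n) x hx0 hxN i]
  congr 2
  have hdet : ∀ y ∈ Finset.Icc (1:ℤ) (N-1), (C y).det = C y 0 0 * C y 1 1 := by
    intro y hy
    simp only [Finset.mem_Icc] at hy
    rw [Matrix.det_fin_two, (hdiag y (by omega) (by omega)).1,
      (hdiag y (by omega) (by omega)).2]
    ring
  rw [Finset.prod_congr rfl hdet, Finset.prod_mul_distrib]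
end
end

section
/- (Double barrier: resonances.) Let N ≥ 1, let C : ℤ → U(2) satisfy the standing Assumption, assume C(x) is diagonal for every x ∈ ℤ∖{0,N} and supp(C−I₂) ⊆ [0,N], and let U = S∘C. Set α = c₂₁(0)·c₁₂(N)·∏_{x=1}^{N−1} det C(x). Then for every λ ∈ ℂ∖{0}, there exists a nonzero outgoing map φ : ℤ → ℂ² with Uφ = λφ if and only if λ^{2N} = α. (Thus the nonzero resonances of U are exactly the 2N-th roots of α.) -/
/-!
An eigenvector `φ` of `U` with eigenvalue `λ ≠ 0` is only rescaled across a diagonal coin: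
`λ φ^L(x) = c₁₁(x+1) φ^L(x+1)` and `λ φ^R(x) = c₂₂(x-1) φ^R(x-1)`. Outgoing therefore forces
`φ^L = 0` on `[N, ∞)` and `φ^R = 0` on `(-∞, 0]`, and then following `φ^L(0)` from `0` to `N - 1`,
through `c₁₂(N)` onto `φ^R(N)`, back from `N` to `1` and through `c₂₁(0)` onto `φ^L(0)` gives
`λ^(2N) φ^L(0) = α φ^L(0)`. As `c₁₁, c₂₂ ≠ 0`, each pair `(φ^L(x-1), φ^R(x))` determines its
neighbours, so `φ^L(0) = 0` would force `φ = 0`. Conversely, when `λ^(2N) = α` the same round trip,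
read as a definition, is a consistent outgoing eigenvector.
-/

noncomputable section

open scoped ComplexConjugate

open Finset

theorem pow_mul_eq_prod_Ioc_mul {M : Type*} [CommMonoid M] {lam : M} {c u : ℤ → M} {a b : ℤ}
    (hab : a ≤ b) (h : ∀ x, a ≤ x → x < b → lam * u x = c (x + 1) * u (x + 1)) :
    lam ^ (b - a).toNat * u a = (∏ y ∈ Ioc a b, c y) * u b := by
  induction b, hab using Int.leInduction with
  | base => simp
  | succ b hab ih =>
    rw [show (b + 1 - a).toNat = (b - a).toNat + 1 by omega, pow_succ', mul_assoc,
      ih fun x hax hxb => h x hax (by omega), ← insert_Ioc_right_eq_Ioc_add_one hab,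
      prod_insert (by simp), mul_left_comm, h b hab (by omega)]
    ac_rfl

theorem pow_mul_eq_prod_Ico_mul {M : Type*} [CommMonoid M] {lam : M} {c u : ℤ → M} {a b : ℤ}
    (hab : a ≤ b) (h : ∀ x, a < x → x ≤ b → lam * u x = c (x - 1) * u (x - 1)) :
    lam ^ (b - a).toNat * u b = (∏ y ∈ Ico a b, c y) * u a := by
  induction b, hab using Int.leInduction with
  | base => simp
  | succ b hab ih =>
    rw [show (b + 1 - a).toNat = (b - a).toNat + 1 by omega, pow_succ, mul_assoc,
      h (b + 1) (by omega) le_rfl, add_sub_cancel_right, mul_left_comm,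
      ih fun x hax hxb => h x hax (by omega), ← prod_Ico_mul_eq_prod_Ico_add_one hab]
    ac_rfl

theorem qwalk_apply_left (C : ℤ → Matrix (Fin 2) (Fin 2) ℂ) (ψ : QWState) (x : ℤ) :
    qwalk C ψ x 0 = C (x + 1) 0 0 * ψ (x + 1) 0 + C (x + 1) 0 1 * ψ (x + 1) 1 := by
  simp [qwalk, Matrix.mulVec, dotProduct, Fin.sum_univ_two]

theorem qwalk_apply_right (C : ℤ → Matrix (Fin 2) (Fin 2) ℂ) (ψ : QWState) (x : ℤ) :
    qwalk C ψ x 1 = C (x - 1) 1 0 * ψ (x - 1) 0 + C (x - 1) 1 1 * ψ (x - 1) 1 := by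
  simp [qwalk, Matrix.mulVec, dotProduct, Fin.sum_univ_two]

section Eigenstate

variable {C : ℤ → Matrix (Fin 2) (Fin 2) ℂ} {lam : ℂ} {φ : QWState}

theorem eigenstate_pair_eq_zero_iff (hlam : lam ≠ 0) (hφ : ∀ x i, qwalk C φ x i = lam * φ x i)
    {x : ℤ} (h00 : C x 0 0 ≠ 0) (h11 : C x 1 1 ≠ 0) :
    (φ (x - 1) 0 = 0 ∧ φ x 1 = 0) ↔ (φ x 0 = 0 ∧ φ (x + 1) 1 = 0) := by
  have hL := hφ (x - 1) 0
  have hR := hφ (x + 1) 1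
  rw [qwalk_apply_left, sub_add_cancel] at hL
  rw [qwalk_apply_right, add_sub_cancel_right] at hR
  constructor
  · rintro ⟨hl, hr⟩
    have hx : φ x 0 = 0 := by simpa [hl, hr, h00] using hL
    exact ⟨hx, by simpa [hx, hr, hlam] using hR⟩
  · rintro ⟨hl, hr⟩
    have hx : φ x 1 = 0 := by simpa [hl, hr, h11] using hR
    exact ⟨by simpa [hx, hl, hlam] using hL, hx⟩

theorem eigenstate_eq_zero_of_pair_eq_zero (hlam : lam ≠ 0)
    (hφ : ∀ x i, qwalk C φ x i = lam * φ x i)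
    (h00 : ∀ x, C x 0 0 ≠ 0) (h11 : ∀ x, C x 1 1 ≠ 0) {x₀ : ℤ}
    (h₀ : φ (x₀ - 1) 0 = 0 ∧ φ x₀ 1 = 0) (x : ℤ) (i : Fin 2) : φ x i = 0 := by
  have hpair : ∀ x, φ (x - 1) 0 = 0 ∧ φ x 1 = 0 := fun x => by
    induction x using Int.inductionOn' (b := x₀) with
    | zero => exact h₀
    | succ k _ ih =>
      simpa using (eigenstate_pair_eq_zero_iff hlam hφ (h00 k) (h11 k)).1 ih
    | pred k _ ih =>
      simpa using
        (eigenstate_pair_eq_zero_iff hlam hφ (h00 (k - 1)) (h11 (k - 1))).2 (by simpa using ih)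
  fin_cases i
  · simpa using (hpair (x + 1)).1
  · exact (hpair x).2

end Eigenstate

section DoubleBarrier

variable {N : ℤ} {C : ℤ → Matrix (Fin 2) (Fin 2) ℂ} {lam : ℂ} {φ : QWState}
  (hdiag : ∀ x : ℤ, x ≠ 0 → x ≠ N → C x 0 1 = 0 ∧ C x 1 0 = 0)

include hdiag in
theorem Outgoing.left_eq_zero_of_eigenstate
    (hN : 0 ≤ N) (hlam : lam ≠ 0)
    (hφ : ∀ x i, qwalk C φ x i = lam * φ x i) (hout : Outgoing φ) (x : ℤ) (hx : N ≤ x) :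
    φ x 0 = 0 := by
  obtain ⟨r, -, hr⟩ := hout
  have hchain := pow_mul_eq_prod_Ioc_mul (c := fun y => C y 0 0) (u := fun y => φ y 0)
    (le_max_left x (r + 1)) fun y hxy _ => by
      rw [← hφ, qwalk_apply_left, (hdiag (y + 1) (by omega) (by omega)).1, zero_mul, add_zero]
  rw [(hr (max x (r + 1)) (by omega)).1, mul_zero] at hchain
  exact (mul_eq_zero.mp hchain).resolve_left (pow_ne_zero _ hlam)

include hdiag in
theorem Outgoing.right_eq_zero_of_eigenstate
    (hN : 0 ≤ N) (hlam : lam ≠ 0)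
    (hφ : ∀ x i, qwalk C φ x i = lam * φ x i) (hout : Outgoing φ) (x : ℤ) (hx : x ≤ 0) :
    φ x 1 = 0 := by
  obtain ⟨r, -, hr⟩ := hout
  have hchain := pow_mul_eq_prod_Ico_mul (c := fun y => C y 1 1) (u := fun y => φ y 1)
    (min_le_right (-(r + 1)) x) fun y _ hyx => by
      rw [← hφ, qwalk_apply_right, (hdiag (y - 1) (by omega) (by omega)).2, zero_mul, zero_add]
  rw [← neg_neg (min _ x), (hr (-min (-(r + 1)) x) (by omega)).2, mul_zero] at hchain
  exact (mul_eq_zero.mp hchain).resolve_left (pow_ne_zero _ hlam)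

variable (hL : ∀ x, N ≤ x → φ x 0 = 0) (hR : ∀ x, x ≤ 0 → φ x 1 = 0)
include hdiag hR in
theorem qwalk_apply_left_of_ne (x : ℤ) (hx : x + 1 ≠ N) :
    qwalk C φ x 0 = C (x + 1) 0 0 * φ (x + 1) 0 := by
  rw [qwalk_apply_left]
  rcases le_or_gt (x + 1) 0 with hx0 | hx0
  · rw [hR _ hx0, mul_zero, add_zero]
  · rw [(hdiag _ hx0.ne' hx).1, zero_mul, add_zero]

include hdiag hL in
theorem qwalk_apply_right_of_ne (x : ℤ) (hx : x - 1 ≠ 0) :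
    qwalk C φ x 1 = C (x - 1) 1 1 * φ (x - 1) 1 := by
  rw [qwalk_apply_right]
  rcases le_or_gt N (x - 1) with hxN | hxN
  · rw [hL _ hxN, mul_zero, zero_add]
  · rw [(hdiag _ hx hxN.ne).2, zero_mul, zero_add]

include hL in
theorem qwalk_apply_left_barrier : qwalk C φ (N - 1) 0 = C N 0 1 * φ N 1 := by
  rw [qwalk_apply_left, sub_add_cancel, hL N le_rfl, mul_zero, zero_add]

include hR in
theorem qwalk_apply_right_barrier : qwalk C φ 1 1 = C 0 1 0 * φ 0 0 := by
  rw [qwalk_apply_right, sub_self, hR 0 le_rfl, mul_zero, add_zero]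

include hdiag hL hR in
theorem pow_mul_eq_of_confined (hN : 1 ≤ N) (hφ : ∀ x i, qwalk C φ x i = lam * φ x i) :
    lam ^ (2 * N.toNat) * φ 0 0 =
      C 0 1 0 * C N 0 1 * ((∏ y ∈ Ioc 0 (N - 1), C y 0 0) * ∏ y ∈ Ico 1 N, C y 1 1) * φ 0 0 := by
  have chainL := pow_mul_eq_prod_Ioc_mul (c := fun y => C y 0 0) (u := fun y => φ y 0)
    (a := 0) (b := N - 1) (by omega) fun x _ hx => by
      rw [← hφ, qwalk_apply_left_of_ne hdiag hR x (by omega)]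
  have chainR := pow_mul_eq_prod_Ico_mul (c := fun y => C y 1 1) (u := fun y => φ y 1)
    hN fun x hx _ => by
      rw [← hφ, qwalk_apply_right_of_ne hdiag hL x (by omega)]
  have linkN : lam * φ (N - 1) 0 = C N 0 1 * φ N 1 := by
    rw [← hφ, qwalk_apply_left_barrier hL]
  have link0 : lam * φ 1 1 = C 0 1 0 * φ 0 0 := by
    rw [← hφ, qwalk_apply_right_barrier hR]
  rw [sub_zero] at chainL
  set m := (N - 1).toNat
  rw [show 2 * N.toNat = m + m + 2 by omega]
  set P := ∏ y ∈ Ioc 0 (N - 1), C y 0 0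
  set Q := ∏ y ∈ Ico 1 N, C y 1 1
  linear_combination lam ^ (m + 2) * chainL + lam ^ (m + 1) * P * linkN
    + lam * P * C N 0 1 * chainR + P * C N 0 1 * Q * link0

include hdiag in
theorem resonance_of_outgoing_eigenstate (hN : 1 ≤ N)
    (h00 : ∀ x, C x 0 0 ≠ 0) (h11 : ∀ x, C x 1 1 ≠ 0) (hlam : lam ≠ 0)
    (hne : ∃ x i, φ x i ≠ 0) (hout : Outgoing φ) (hφ : ∀ x i, qwalk C φ x i = lam * φ x i) :
    lam ^ (2 * N.toNat) =
      C 0 1 0 * C N 0 1 * ((∏ y ∈ Ioc 0 (N - 1), C y 0 0) * ∏ y ∈ Ico 1 N, C y 1 1) := by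
  have hL := hout.left_eq_zero_of_eigenstate hdiag (by omega) hlam hφ
  have hR := hout.right_eq_zero_of_eigenstate hdiag (by omega) hlam hφ
  have h0 : φ 0 0 ≠ 0 := by
    intro h0
    have h1 : φ 1 1 = 0 := by
      have h := hφ 1 1
      rw [qwalk_apply_right_barrier hR, h0, mul_zero] at h
      exact (mul_eq_zero.mp h.symm).resolve_left hlam
    obtain ⟨x, i, hx⟩ := hne
    exact hx <|
      eigenstate_eq_zero_of_pair_eq_zero hlam hφ h00 h11 (x₀ := 1) ⟨by simpa using h0, h1⟩ x i
  exact mul_right_cancel₀ h0 (pow_mul_eq_of_confined hdiag hL hR hN hφ)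

include hdiag in
theorem prod_det_eq_of_diag :
    ∏ y ∈ Icc 1 (N - 1), (C y).det =
      (∏ y ∈ Ioc 0 (N - 1), C y 0 0) * ∏ y ∈ Ico 1 N, C y 1 1 := by
  rw [← Icc_add_one_left_eq_Ioc, zero_add, ← Icc_sub_one_right_eq_Ico, ← prod_mul_distrib]
  refine prod_congr rfl fun y hy => ?_
  rw [mem_Icc] at hy
  obtain ⟨h01, h10⟩ := hdiag y (by omega) (by omega)
  rw [Matrix.det_fin_two, h01, h10, zero_mul, sub_zero]

/-- Normalised by `φ^L(N - 1) = lam ^ (N - 1)`; the eigenvalue equation then holds everywhere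
except possibly at the left component of `x = N - 1`, where it amounts to `lam ^ (2N) = α`. -/
def resonantState (C : ℤ → Matrix (Fin 2) (Fin 2) ℂ) (N : ℤ) (lam : ℂ) : QWState := fun x =>
  ![if x < N then lam ^ x * ∏ y ∈ Ioc x (N - 1), C y 0 0 else 0,
    if 0 < x then C 0 1 0 * (∏ y ∈ Ioc 0 (N - 1), C y 0 0) * lam ^ (-x) * ∏ y ∈ Ico 1 x, C y 1 1
    else 0]

theorem resonantState_apply_left (x : ℤ) :
    resonantState C N lam x 0 = if x < N then lam ^ x * ∏ y ∈ Ioc x (N - 1), C y 0 0 else 0 :=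
  rfl

theorem resonantState_apply_right (x : ℤ) :
    resonantState C N lam x 1 = if 0 < x then
      C 0 1 0 * (∏ y ∈ Ioc 0 (N - 1), C y 0 0) * lam ^ (-x) * ∏ y ∈ Ico 1 x, C y 1 1 else 0 :=
  rfl

theorem resonantState_left_of_le (x : ℤ) (hx : N ≤ x) : resonantState C N lam x 0 = 0 := by
  simp [resonantState, not_lt.2 hx]

theorem resonantState_right_of_nonpos (x : ℤ) (hx : x ≤ 0) : resonantState C N lam x 1 = 0 := by
  simp [resonantState, not_lt.2 hx]

theorem resonantState_outgoing (hN : 0 < N) : Outgoing (resonantState C N lam) :=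
  ⟨N, hN, fun x hx =>
    ⟨resonantState_left_of_le x hx.le, resonantState_right_of_nonpos (-x) (by omega)⟩⟩

theorem resonantState_ne_zero (hlam : lam ≠ 0) : resonantState C N lam (N - 1) 0 ≠ 0 := by
  simpa [resonantState] using zpow_ne_zero _ hlam

include hdiag in
theorem qwalk_resonantState_left (hN : 1 ≤ N) (hlam : lam ≠ 0)
    (hres : lam ^ (2 * N.toNat) =
      C 0 1 0 * C N 0 1 * ((∏ y ∈ Ioc 0 (N - 1), C y 0 0) * ∏ y ∈ Ico 1 N, C y 1 1)) (x : ℤ) :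
    qwalk C (resonantState C N lam) x 0 = lam * resonantState C N lam x 0 := by
  have hL := resonantState_left_of_le (C := C) (N := N) (lam := lam)
  have hR := resonantState_right_of_nonpos (C := C) (N := N) (lam := lam)
  rcases lt_trichotomy x (N - 1) with hx | rfl | hx
  · rw [qwalk_apply_left_of_ne hdiag hR x (by omega), resonantState_apply_left,
      resonantState_apply_left, if_pos (by omega), if_pos (by omega),
      ← insert_Ioc_add_one_left_eq_Ioc hx, prod_insert left_notMem_Ioc, zpow_add_one₀ hlam]
    ring
  · rw [qwalk_apply_left_barrier hL]
    have hNN : lam ^ (2 * N.toNat) = lam ^ N * lam ^ N := by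
      rw [← zpow_natCast, ← zpow_add₀ hlam]; congr 1; omega
    rw [resonantState_apply_right, resonantState_apply_left, if_pos (by omega),
      if_pos (by omega), Ioc_self, prod_empty, mul_one, zpow_neg, zpow_sub_one₀ hlam]
    have := zpow_ne_zero N hlam
    field_simp
    linear_combination -hres + hNN
  · rw [qwalk_apply_left_of_ne hdiag hR x (by omega), hL x (by omega), hL (x + 1) (by omega),
      mul_zero, mul_zero]

include hdiag in
theorem qwalk_resonantState_right (hN : 0 < N) (hlam : lam ≠ 0) (x : ℤ) :
    qwalk C (resonantState C N lam) x 1 = lam * resonantState C N lam x 1 := by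
  have hL := resonantState_left_of_le (C := C) (N := N) (lam := lam)
  have hR := resonantState_right_of_nonpos (C := C) (N := N) (lam := lam)
  rcases lt_trichotomy x 1 with hx | rfl | hx
  · rw [qwalk_apply_right_of_ne hdiag hL x (by omega), hR x (by omega), hR (x - 1) (by omega),
      mul_zero, mul_zero]
  · rw [qwalk_apply_right_barrier hR, resonantState_apply_left, resonantState_apply_right,
      if_pos hN, if_pos one_pos, Ico_self, prod_empty, zpow_zero, one_mul, mul_one, zpow_neg_one]
    field_simp
  · rw [qwalk_apply_right_of_ne hdiag hL x (by omega)]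
    have hprod : ∏ y ∈ Ico 1 x, C y 1 1 = (∏ y ∈ Ico 1 (x - 1), C y 1 1) * C (x - 1) 1 1 := by
      rw [prod_Ico_mul_eq_prod_Ico_add_one (by omega), sub_add_cancel]
    rw [resonantState_apply_right, resonantState_apply_right, if_pos (by omega), if_pos (by omega),
      hprod, show -(x - 1) = -x + 1 by ring, zpow_add_one₀ hlam]
    ring

end DoubleBarrier

theorem double_barrier_resonances_general
    (N : ℤ) (hN : 1 ≤ N)
    (C : ℤ → Matrix (Fin 2) (Fin 2) ℂ) (hC : CoinAssumption C)
    (hdiag : ∀ x : ℤ, x ≠ 0 → x ≠ N → C x 0 1 = 0 ∧ C x 1 0 = 0)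
    (lam : ℂ) (hlam : lam ≠ 0) :
    (∃ φ : QWState, (∃ x : ℤ, ∃ i : Fin 2, φ x i ≠ 0) ∧ Outgoing φ ∧
        (∀ x : ℤ, ∀ i : Fin 2, qwalk C φ x i = lam * φ x i))
      ↔ lam ^ (2 * N.toNat)
          = C 0 1 0 * C N 0 1 * ∏ y ∈ Finset.Icc (1:ℤ) (N - 1), (C y).det := by
  rw [prod_det_eq_of_diag hdiag]
  constructor
  · rintro ⟨φ, hne, hout, hφ⟩
    exact resonance_of_outgoing_eigenstate hdiag hN hC.d11 hC.d22 hlam hne hout hφ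
  · intro hres
    refine ⟨resonantState C N lam, ⟨N - 1, 0, resonantState_ne_zero hlam⟩,
      resonantState_outgoing (by omega), fun x => Fin.forall_fin_two.2 ⟨?_, ?_⟩⟩
    · exact qwalk_resonantState_left hdiag hN hlam hres x
    · exact qwalk_resonantState_right hdiag (by omega) hlam x

/-- Double barrier: the nonzero resonances are exactly the 2N-th roots of
α = c₂₁(0)c₁₂(N)∏_{x=1}^{N−1} det C(x). -/
theorem double_barrier_resonances
    (N : ℤ) (hN : 1 ≤ N)
    (C : ℤ → Matrix (Fin 2) (Fin 2) ℂ) (hC : CoinAssumption C)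
    (hdiag : ∀ x : ℤ, x ≠ 0 → x ≠ N → C x 0 1 = 0 ∧ C x 1 0 = 0)
    (hsupp : ∀ x : ℤ, C x ≠ 1 → 0 ≤ x ∧ x ≤ N)
    (lam : ℂ) (hlam : lam ≠ 0) :
    (∃ φ : QWState, (∃ x : ℤ, ∃ i : Fin 2, φ x i ≠ 0) ∧ Outgoing φ ∧
        (∀ x : ℤ, ∀ i : Fin 2, qwalk C φ x i = lam * φ x i))
      ↔ lam ^ (2 * N.toNat)
          = C 0 1 0 * C N 0 1 * ∏ y ∈ Finset.Icc (1:ℤ) (N - 1), (C y).det :=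
  double_barrier_resonances_general N hN C hC hdiag lam hlam
end
end

section
/- (Rotation symmetry of resonances.) Let C : ℤ → U(2) satisfy the standing Assumption, let U = S∘C, and let k ≥ 1 be an integer such that c₁₂(x) = 0 for every x ∈ ℤ∖kℤ (i.e. supp c₁₂ ⊆ kℤ). Let l ∈ {0, 1, …, 2k−1}, let λ ∈ ℂ∖{0}, and let φ : ℤ → ℂ² be an outgoing map with Uφ = λφ. Define φ'(x) = (e^{ilπx/k} φ^L(x), e^{−ilπx/k} φ^R(x)). Then φ' is outgoing and Uφ' = e^{ilπ/k} λ · φ'. In particular, if λ is a resonance of U then so is e^{ilπ/k}λ. -/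
noncomputable section

open scoped ComplexConjugate

/-!
The phase `e^{ilπx/k}` on the left component gains the factor `e^{ilπ/k}` per step to the right,
and the phase `e^{-ilπx/k}` on the right component gains the same factor per step to the left, so
this gauge transformation intertwines the shift with multiplication by `e^{ilπ/k}`. It commutes
with the coin wherever the coin is diagonal; at the sites of `kℤ`, where the coin may mix the
components, the two phases coincide (both are `±1`). Unitarity makes `c₂₁` vanish with `c₁₂`.
-/

open Complex

theorem Matrix.norm_apply_zero_one_eq_of_mem_unitaryGroup {K : Type*} [RCLike K]
    {U : Matrix (Fin 2) (Fin 2) K} (hU : U ∈ Matrix.unitaryGroup (Fin 2) K) :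
    ‖U 0 1‖ = ‖U 1 0‖ := by
  have hrow := congrFun (congrFun (Matrix.mem_unitaryGroup_iff.mp hU) 0) 0
  have hcol := congrFun (congrFun (Matrix.mem_unitaryGroup_iff'.mp hU) 0) 0
  simp only [Matrix.mul_apply, Fin.sum_univ_two, Matrix.star_apply, Matrix.one_apply_eq,
    RCLike.star_def, RCLike.mul_conj, RCLike.conj_mul] at hrow hcol
  have h : ‖U 0 1‖ ^ 2 = ‖U 1 0‖ ^ 2 := by
    exact_mod_cast (add_left_cancel (hrow.trans hcol.symm) : _)
  exact (pow_left_inj₀ (norm_nonneg _) (norm_nonneg _) two_ne_zero).mp h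

def phaseShift (a b : ℤ → ℂ) (ψ : QWState) : QWState :=
  fun x => ![a x * ψ x 0, b x * ψ x 1]

theorem phaseShift_smul (a b : ℤ → ℂ) (c : ℂ) (ψ : QWState) :
    phaseShift a b (c • ψ) = c • phaseShift a b ψ := by
  funext x i
  fin_cases i <;>
    simp only [phaseShift, Fin.isValue, Pi.smul_apply, smul_eq_mul, Fin.zero_eta, Fin.mk_one,
      Matrix.cons_val_zero, Matrix.cons_val_one, Matrix.cons_val_fin_one] <;>
    ring

theorem Outgoing.phaseShift {ψ : QWState} (hψ : Outgoing ψ) (a b : ℤ → ℂ) :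
    Outgoing (phaseShift a b ψ) := by
  obtain ⟨r, hr, hvan⟩ := hψ
  exact ⟨r, hr, fun x hx => by simp [_root_.phaseShift, hvan x hx]⟩

theorem qwalk_phaseShift {C : ℤ → Matrix (Fin 2) (Fin 2) ℂ} {a b : ℤ → ℂ} {μ : ℂ}
    (ha : ∀ x, a (x + 1) = μ * a x) (hb : ∀ x, b (x - 1) = μ * b x)
    (hdiag : ∀ x, a x ≠ b x → C x 0 1 = 0 ∧ C x 1 0 = 0) (ψ : QWState) :
    qwalk C (phaseShift a b ψ) = μ • phaseShift a b (qwalk C ψ) := by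
  have hmix : ∀ x, C x 0 1 * b x = C x 0 1 * a x ∧ C x 1 0 * a x = C x 1 0 * b x := by
    intro x
    by_cases h : a x = b x
    · simp [h]
    · simp [hdiag x h]
  funext x i
  fin_cases i <;>
    simp only [qwalk, phaseShift, Matrix.mulVec, dotProduct, Fin.sum_univ_two, Fin.isValue,
      Matrix.cons_val_zero, Matrix.cons_val_one, Matrix.cons_val_fin_one, Fin.zero_eta, Fin.mk_one,
      Pi.smul_apply, smul_eq_mul]
  · rw [← mul_assoc (C _ 0 1), (hmix (x + 1)).1, ha]
    ring
  · rw [← mul_assoc (C _ 1 0), (hmix (x - 1)).2, hb]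
    ring

/-- The rotated state `φ'` of the paper. -/
def rotatePhase (k l : ℕ) : QWState → QWState :=
  phaseShift (fun x => exp ((l : ℂ) * Real.pi * (x : ℂ) * I / (k : ℂ)))
    (fun x => exp (-((l : ℂ) * Real.pi * (x : ℂ) * I / (k : ℂ))))

theorem exp_rotation_angle_eq_exp_neg {k : ℕ} (hk : k ≠ 0) (l : ℕ) (j : ℤ) :
    exp ((l : ℂ) * Real.pi * ((k * j : ℤ) : ℂ) * I / (k : ℂ))
      = exp (-((l : ℂ) * Real.pi * ((k * j : ℤ) : ℂ) * I / (k : ℂ))) := by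
  rw [exp_eq_exp_iff_exists_int]
  exact ⟨l * j, by push_cast; field_simp; ring⟩

theorem qwalk_rotatePhase {C : ℤ → Matrix (Fin 2) (Fin 2) ℂ} {k : ℕ} (hk : k ≠ 0) (l : ℕ)
    (hdiag : ∀ x : ℤ, ¬ (k : ℤ) ∣ x → C x 0 1 = 0 ∧ C x 1 0 = 0) (ψ : QWState) :
    qwalk C (rotatePhase k l ψ)
      = exp ((l : ℂ) * Real.pi * I / (k : ℂ)) • rotatePhase k l (qwalk C ψ) := by
  refine qwalk_phaseShift (fun x => ?_) (fun x => ?_) (fun x hx => hdiag x ?_) ψ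
  · rw [← exp_add]
    push_cast
    ring_nf
  · rw [← exp_add]
    push_cast
    ring_nf
  · rintro ⟨j, rfl⟩
    exact hx (exp_rotation_angle_eq_exp_neg hk l j)

theorem rotation_symmetry_of_resonances_general
    (C : ℤ → Matrix (Fin 2) (Fin 2) ℂ) (hC : CoinAssumption C)
    (k : ℕ) (hk : 1 ≤ k)
    (hsupp : ∀ x : ℤ, ¬ ((k : ℤ) ∣ x) → C x 0 1 = 0)
    (l : ℕ)
    (lam : ℂ)
    (φ : QWState) (hout : Outgoing φ)
    (heig : ∀ x : ℤ, ∀ i : Fin 2, qwalk C φ x i = lam * φ x i)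
    (φ' : QWState)
    (hφ' : ∀ x : ℤ,
      φ' x = ![Complex.exp ((l : ℂ) * Real.pi * (x : ℂ) * Complex.I / (k : ℂ)) * φ x 0,
               Complex.exp (-((l : ℂ) * Real.pi * (x : ℂ) * Complex.I / (k : ℂ))) * φ x 1]) :
    Outgoing φ' ∧
      ∀ x : ℤ, ∀ i : Fin 2,
        qwalk C φ' x i = Complex.exp ((l : ℂ) * Real.pi * Complex.I / (k : ℂ)) * lam * φ' x i := by
  have hdiag : ∀ x : ℤ, ¬ (k : ℤ) ∣ x → C x 0 1 = 0 ∧ C x 1 0 = 0 := fun x hx => by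
    have h01 := hsupp x hx
    have hnorm := Matrix.norm_apply_zero_one_eq_of_mem_unitaryGroup (hC.unitary x)
    exact ⟨h01, norm_eq_zero.mp (by rw [← hnorm, h01, norm_zero])⟩
  have heig' : qwalk C φ = lam • φ := funext fun x => funext (heig x)
  obtain rfl : φ' = rotatePhase k l φ := funext hφ'
  refine ⟨hout.phaseShift _ _, fun x i => ?_⟩
  rw [qwalk_rotatePhase (by omega) l hdiag, heig', rotatePhase, phaseShift_smul, smul_smul]
  rfl

/-- Rotation symmetry of resonances: if supp c₁₂ ⊆ kℤ and Uφ = λφ with φ outgoing, then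
φ'(x) = (e^{ilπx/k}φ^L(x), e^{−ilπx/k}φ^R(x)) is outgoing and Uφ' = e^{ilπ/k}λφ'. -/
theorem rotation_symmetry_of_resonances
    (C : ℤ → Matrix (Fin 2) (Fin 2) ℂ) (hC : CoinAssumption C)
    (k : ℕ) (hk : 1 ≤ k)
    (hsupp : ∀ x : ℤ, ¬ ((k : ℤ) ∣ x) → C x 0 1 = 0)
    (l : ℕ) (hl : l ≤ 2 * k - 1)
    (lam : ℂ) (hlam : lam ≠ 0)
    (φ : QWState) (hout : Outgoing φ)
    (heig : ∀ x : ℤ, ∀ i : Fin 2, qwalk C φ x i = lam * φ x i)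
    (φ' : QWState)
    (hφ' : ∀ x : ℤ,
      φ' x = ![Complex.exp ((l : ℂ) * Real.pi * (x : ℂ) * Complex.I / (k : ℂ)) * φ x 0,
               Complex.exp (-((l : ℂ) * Real.pi * (x : ℂ) * Complex.I / (k : ℂ))) * φ x 1]) :
    Outgoing φ' ∧
      ∀ x : ℤ, ∀ i : Fin 2,
        qwalk C φ' x i = Complex.exp ((l : ℂ) * Real.pi * Complex.I / (k : ℂ)) * lam * φ' x i :=
  rotation_symmetry_of_resonances_general C hC k hk hsupp l lam φ hout heig φ' hφ'
end
end

section
/- (Outgoing–incoming symmetry.) Let C : ℤ → U(2) satisfy the standing Assumption and suppose c₁₁(x) = c₂₂(x) for every x ∈ ℤ. Let U = S∘C, let λ ∈ ℂ∖{0}, and let φ : ℤ → ℂ² satisfy Uφ = λφ. Define ψ : ℤ → ℂ² by ψ(x) = (conj(φ^R(x+1)), conj(φ^L(x−1))) (that is, ψ = S P φ̄ where P swaps the two components and the bar denotes entrywise complex conjugation). Then Uψ = (conj(λ))^{−1} ψ; moreover, if φ is outgoing then ψ is incoming. (Hence λ is an outgoing resonance iff conj(λ)^{−1} is an incoming resonance.)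 -/
noncomputable section

open scoped ComplexConjugate

/-- Incoming: ψ^L vanishes far left, ψ^R vanishes far right. -/
def Incoming (ψ : QWState) : Prop :=
  ∃ r : ℤ, 0 < r ∧ ∀ x : ℤ, r < x → ψ (-x) 0 = 0 ∧ ψ x 1 = 0

/-- Outgoing–incoming symmetry: if c₁₁ = c₂₂ and Uφ = λφ, then
ψ = S P φ̄ satisfies Uψ = conj(λ)⁻¹ ψ, and ψ is incoming whenever φ is outgoing. -/
theorem outgoing_incoming_symmetry
    (C : ℤ → Matrix (Fin 2) (Fin 2) ℂ) (hC : CoinAssumption C)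
    (hsym : ∀ x : ℤ, C x 0 0 = C x 1 1)
    (lam : ℂ) (hlam : lam ≠ 0)
    (φ : QWState)
    (heig : ∀ x : ℤ, ∀ i : Fin 2, qwalk C φ x i = lam * φ x i)
    (ψ : QWState)
    (hψ : ∀ x : ℤ, ψ x = ![conj (φ (x + 1) 1), conj (φ (x - 1) 0)]) :
    (∀ x : ℤ, ∀ i : Fin 2, qwalk C ψ x i = (conj lam)⁻¹ * ψ x i) ∧
      (Outgoing φ → Incoming ψ) := by
  constructor
  · have hlamc : (conj lam) ≠ 0 := by simpa using hlam
    -- row orthonormality: C y * star (C y) = 1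
    have hrow : ∀ y : ℤ, C y * star (C y) = 1 := fun y => (Unitary.mem_iff.mp (hC.unitary y)).2
    have R1 : ∀ y : ℤ, C y 1 0 * conj (C y 0 0) + C y 1 1 * conj (C y 0 1) = 0 := by
      intro y
      have := congrFun (congrFun (hrow y) 1) 0
      simpa [Matrix.mul_apply, Fin.sum_univ_two, Matrix.star_apply, Matrix.one_apply] using this
    have R2 : ∀ y : ℤ, C y 0 0 * conj (C y 0 0) + C y 0 1 * conj (C y 0 1) = 1 := by
      intro y
      have := congrFun (congrFun (hrow y) 0) 0
      simpa [Matrix.mul_apply, Fin.sum_univ_two, Matrix.star_apply, Matrix.one_apply] using this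
    have R3 : ∀ y : ℤ, C y 1 0 * conj (C y 1 0) + C y 1 1 * conj (C y 1 1) = 1 := by
      intro y
      have := congrFun (congrFun (hrow y) 1) 1
      simpa [Matrix.mul_apply, Fin.sum_univ_two, Matrix.star_apply, Matrix.one_apply] using this
    have R4 : ∀ y : ℤ, C y 0 0 * conj (C y 1 0) + C y 0 1 * conj (C y 1 1) = 0 := by
      intro y
      have := congrFun (congrFun (hrow y) 0) 1
      simpa [Matrix.mul_apply, Fin.sum_univ_two, Matrix.star_apply, Matrix.one_apply] using this
    -- expanded eigen equations, conjugated
    have E0 : ∀ y : ℤ, conj lam * conj (φ y 0)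
        = conj (C (y+1) 0 0) * conj (φ (y+1) 0) + conj (C (y+1) 0 1) * conj (φ (y+1) 1) := by
      intro y
      have h := (heig y 0).symm
      have h2 := congrArg conj h
      simpa [qwalk, Matrix.mulVec, dotProduct, Fin.sum_univ_two, map_add, map_mul] using h2
    have E1 : ∀ y : ℤ, conj lam * conj (φ y 1)
        = conj (C (y-1) 1 0) * conj (φ (y-1) 0) + conj (C (y-1) 1 1) * conj (φ (y-1) 1) := by
      intro y
      have h := (heig y 1).symm
      have h2 := congrArg conj h
      simpa [qwalk, Matrix.mulVec, dotProduct, Fin.sum_univ_two, map_add, map_mul] using h2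
    intro x i
    fin_cases i
    · -- component 0
      have e1 := E1 (x+2)
      have e0 := E0 x
      rw [show (x:ℤ)+2-1 = x+1 by ring] at e1
      have r1 := R1 (x+1); have r2 := R2 (x+1)
      have hs := hsym (x+1)
      rw [eq_inv_mul_iff_mul_eq₀ hlamc]
      show conj lam * ((C (x+1)).mulVec (ψ (x+1)) 0) = ψ x 0
      simp only [hψ, Matrix.mulVec, dotProduct, Fin.sum_univ_two,
        Matrix.cons_val_zero, Matrix.cons_val_one, Matrix.head_cons,
        show (x:ℤ)+1+1 = x+2 by ring, add_sub_cancel_right]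
      have r1' := congrArg conj r1
      simp only [map_add, map_mul, map_zero, Complex.conj_conj] at r1'
      have hs' := congrArg conj hs
      linear_combination (C (x+1) 0 0) * e1 + (C (x+1) 0 1) * e0
        + conj (φ (x+1) 0) * r1' + conj (φ (x+1) 1) * r2
        + (C (x+1) 0 1 * conj (φ (x+1) 0) - C (x+1) 0 0 * conj (φ (x+1) 1)) * hs'
    · -- component 1
      have e1 := E1 x
      have e0 := E0 (x-2)
      rw [show (x:ℤ)-2+1 = x-1 by ring] at e0
      have r3 := R3 (x-1); have r4 := R4 (x-1)
      have hs := hsym (x-1)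
      rw [eq_inv_mul_iff_mul_eq₀ hlamc]
      show conj lam * ((C (x-1)).mulVec (ψ (x-1)) 1) = ψ x 1
      simp only [hψ, Matrix.mulVec, dotProduct, Fin.sum_univ_two,
        Matrix.cons_val_zero, Matrix.cons_val_one, Matrix.head_cons,
        show (x:ℤ)-1-1 = x-2 by ring, sub_add_cancel]
      have r3' := congrArg conj r3
      have r4' := congrArg conj r4
      simp only [map_add, map_mul, map_zero, map_one, Complex.conj_conj] at r3' r4'
      have hs' := congrArg conj hs
      linear_combination (C (x-1) 1 0) * e1 + (C (x-1) 1 1) * e0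
        + conj (φ (x-1) 0) * r3' + conj (φ (x-1) 1) * r4'
        + (C (x-1) 1 1 * conj (φ (x-1) 0) - C (x-1) 1 0 * conj (φ (x-1) 1)) * hs'
  · rintro ⟨r, hr, h⟩
    refine ⟨r + 1, by linarith, fun x hx => ?_⟩
    have h1 := h (x - 1) (by linarith)
    constructor
    · rw [hψ]
      simp only [Matrix.cons_val_zero]
      rw [show (-x : ℤ) + 1 = -(x - 1) by ring, h1.2, map_zero]
    · simp [hψ, h1.1]
end
end
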